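/- arXiv:2201.05871 — 5 statements merged into one kernel-verified Lean document; each statement's English description precedes it below -/
import Mathlib

section
/- Let p be an odd prime and let y1, y2, y3 ∈ ℤ_p satisfy ‖y1‖_p = ‖y2‖_p = ‖y3‖_p = 1 and y1² + y2² = y3². Then there exist t, u ∈ ℤ_p with ‖t‖_p = ‖u‖_p = ‖1−t²‖_p = ‖1+t²‖_p = 1 such that y1 = (1−t²)·u, y2 = 2t·u and y3 = (1+t²)·u. -/
/-!
With `s = y₁ + y₃`, `t = y₂ / s` and `u = s / 2`, the identity `s² - y₂² = 2 y₁ s` (a rewriting of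
`y₁² + y₂² = y₃²`) gives `y₁ = (1 - t²) u`, and symmetrically `y₃ = (1 + t²) u`. Everything is
defined because `2` and `s` are units, the latter as a factor of the unit `(y₃ - y₁) s = y₂²`;
likewise `1 ± t²` are units as factors of `y₁` and `y₃`.
-/

section Pythagorean

variable {R : Type*} [CommRing R] {x y z : R}

lemma isUnit_add_of_sq_add_sq_eq_sq (hy : IsUnit y) (h : x ^ 2 + y ^ 2 = z ^ 2) :
    IsUnit (x + z) :=
  isUnit_of_mul_isUnit_right (x := z - x) <| by
    rw [show (z - x) * (x + z) = y ^ 2 by linear_combination -h]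
    exact hy.pow 2

theorem exists_unit_param_of_sq_add_sq_eq_sq (h2 : IsUnit (2 : R)) (hx : IsUnit x)
    (hy : IsUnit y) (hz : IsUnit z) (h : x ^ 2 + y ^ 2 = z ^ 2) :
    ∃ t u : R, IsUnit t ∧ IsUnit u ∧ IsUnit (1 - t ^ 2) ∧ IsUnit (1 + t ^ 2) ∧
      x = (1 - t ^ 2) * u ∧ y = 2 * t * u ∧ z = (1 + t ^ 2) * u := by
  obtain ⟨s, hs⟩ := isUnit_add_of_sq_add_sq_eq_sq hy h
  obtain ⟨two, htwo⟩ := h2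
  have hs_inv : (x + z) * ↑s⁻¹ = 1 := hs ▸ s.mul_inv
  have htwo_inv : 2 * ↑two⁻¹ = (1 : R) := htwo ▸ two.mul_inv
  set a : R := ↑s⁻¹
  set b : R := ↑two⁻¹
  have hx_eq : x = (1 - (y * a) ^ 2) * ((x + z) * b) := by
    linear_combination (-x) * htwo_inv + (b * (z - x) * ((x + z) * a + 1)) * hs_inv
      + (b * a ^ 2 * (x + z)) * h
  have hz_eq : z = (1 + (y * a) ^ 2) * ((x + z) * b) := by
    linear_combination (-z) * htwo_inv - (b * (z - x) * ((x + z) * a + 1)) * hs_inv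
      - (b * a ^ 2 * (x + z)) * h
  refine ⟨y * a, (x + z) * b, hy.mul s⁻¹.isUnit, hs ▸ s.isUnit.mul two⁻¹.isUnit,
    isUnit_of_mul_isUnit_left (hx_eq ▸ hx), isUnit_of_mul_isUnit_left (hz_eq ▸ hz), hx_eq,
    by linear_combination (-y * 2 * b) * hs_inv - y * htwo_inv, hz_eq⟩

end Pythagorean

theorem stmt_5 (p : ℕ) [hp : Fact p.Prime] (hodd : Odd p)
    (y1 y2 y3 : ℤ_[p]) (h1 : ‖y1‖ = 1) (h2 : ‖y2‖ = 1) (h3 : ‖y3‖ = 1)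
    (h : y1 ^ 2 + y2 ^ 2 = y3 ^ 2) :
    ∃ t u : ℤ_[p], ‖t‖ = 1 ∧ ‖u‖ = 1 ∧ ‖1 - t ^ 2‖ = 1 ∧ ‖1 + t ^ 2‖ = 1 ∧
      y1 = (1 - t ^ 2) * u ∧ y2 = 2 * t * u ∧ y3 = (1 + t ^ 2) * u := by
  have two_isUnit : IsUnit (2 : ℤ_[p]) :=
    PadicInt.isUnit_iff.mpr <| by
      exact_mod_cast PadicInt.norm_natCast_eq_one_iff.mpr hodd.coprime_two_right
  simp_rw [← PadicInt.isUnit_iff] at h1 h2 h3 ⊢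
  exact exists_unit_param_of_sq_add_sq_eq_sq two_isUnit h1 h2 h3 h
end

section
/- Let p be an odd prime, n ≥ 1 an integer, and y1, y2 ∈ ℤ with p ∤ y1·y2 and y1² + y2² ≡ 1 (mod p^n). Then there exists t ∈ ℤ with p ∤ t·(1−t²)·(1+t²) such that (1+t²)·y1 ≡ 1−t² (mod p^n) and (1+t²)·y2 ≡ 2t (mod p^n). -/
/-!
Projecting the circle `x² + y² = 1` from the point `(-1, 0)`: if `1 + x` is invertible with
inverse `v`, the slope `t = y v` satisfies `1 + t² = 2v` and `1 - t² = 2xv`, so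
`(1 + t²) x = 1 - t²`, `(1 + t²) y = 2t` and `t (1 - t²) (1 + t²) = 4xy v³`.
Modulo `p`, the relation forces `1 + x ≠ 0` as soon as `y ≠ 0`, so `1 + y₁` is invertible modulo
`p^n`; and `4 y₁ y₂ v³` is a unit modulo the odd prime `p`.
-/

section CircleSlope

variable {R : Type*} [CommRing R] {x y v : R}

theorem one_add_ne_zero_of_sq_add_sq_eq_one [NoZeroDivisors R] (h : x ^ 2 + y ^ 2 = 1)
    (hy : y ≠ 0) : 1 + x ≠ 0 := by
  intro hx
  have : y ^ 2 = 0 := by linear_combination h + (1 - x) * hx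
  exact hy (pow_eq_zero_iff two_ne_zero |>.mp this)

theorem one_add_slope_sq (h : x ^ 2 + y ^ 2 = 1) (hv : v * (1 + x) = 1) :
    1 + (y * v) ^ 2 = 2 * v := by
  linear_combination v ^ 2 * h + (2 * v - v * (1 + x) - 1) * hv

theorem one_sub_slope_sq (h : x ^ 2 + y ^ 2 = 1) (hv : v * (1 + x) = 1) :
    1 - (y * v) ^ 2 = 2 * x * v := by
  linear_combination -2 * hv - one_add_slope_sq h hv

theorem one_add_slope_sq_mul_fst (h : x ^ 2 + y ^ 2 = 1) (hv : v * (1 + x) = 1) :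
    (1 + (y * v) ^ 2) * x = 1 - (y * v) ^ 2 := by
  rw [one_add_slope_sq h hv, one_sub_slope_sq h hv]
  ring

theorem one_add_slope_sq_mul_snd (h : x ^ 2 + y ^ 2 = 1) (hv : v * (1 + x) = 1) :
    (1 + (y * v) ^ 2) * y = 2 * (y * v) := by
  rw [one_add_slope_sq h hv]
  ring

theorem slope_mul_one_sub_sq_mul_one_add_sq (h : x ^ 2 + y ^ 2 = 1) (hv : v * (1 + x) = 1) :
    y * v * (1 - (y * v) ^ 2) * (1 + (y * v) ^ 2) = 2 ^ 2 * (x * y) * v ^ 3 := by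
  rw [one_add_slope_sq h hv, one_sub_slope_sq h hv]
  ring

end CircleSlope

theorem Int.exists_mul_modEq_one_of_isCoprime {m a : ℤ} (h : IsCoprime m a) :
    ∃ v, v * a ≡ 1 [ZMOD m] := by
  obtain ⟨u, v, huv⟩ := h
  exact ⟨v, Int.modEq_iff_dvd.mpr ⟨u, by linear_combination -huv⟩⟩

theorem ZMod.intCast_eq_intCast_iff_pow (a b : ℤ) (p n : ℕ) :
    (a : ZMod (p ^ n)) = b ↔ a ≡ b [ZMOD (p : ℤ) ^ n] := by
  rw [ZMod.intCast_eq_intCast_iff]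
  push_cast
  rfl

theorem stmt_6 (p : ℕ) (hp : p.Prime) (hodd : Odd p) (n : ℕ) (hn : 1 ≤ n)
    (y1 y2 : ℤ) (hy : ¬ (p : ℤ) ∣ y1 * y2)
    (h : y1 ^ 2 + y2 ^ 2 ≡ 1 [ZMOD (p : ℤ) ^ n]) :
    ∃ t : ℤ, ¬ (p : ℤ) ∣ t * (1 - t ^ 2) * (1 + t ^ 2) ∧
      (1 + t ^ 2) * y1 ≡ 1 - t ^ 2 [ZMOD (p : ℤ) ^ n] ∧
      (1 + t ^ 2) * y2 ≡ 2 * t [ZMOD (p : ℤ) ^ n] := by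
  have : Fact p.Prime := ⟨hp⟩
  have hpn : (p : ℤ) ∣ (p : ℤ) ^ n := dvd_pow_self _ (by omega)
  have hcircle_p : (y1 : ZMod p) ^ 2 + (y2 : ZMod p) ^ 2 = 1 := by
    exact_mod_cast (ZMod.intCast_eq_intCast_iff _ _ p).mpr (h.of_dvd hpn)
  have hy_p : (y1 : ZMod p) * y2 ≠ 0 := by
    exact_mod_cast mt (ZMod.intCast_zmod_eq_zero_iff_dvd _ p).mp hy
  have hcop : IsCoprime ((p : ℤ) ^ n) (1 + y1) := by
    refine IsCoprime.pow_left ((Nat.prime_iff_prime_int.mp hp).coprime_iff_not_dvd.mpr ?_)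
    rw [← ZMod.intCast_zmod_eq_zero_iff_dvd]
    push_cast
    exact one_add_ne_zero_of_sq_add_sq_eq_one hcircle_p (right_ne_zero_of_mul hy_p)
  obtain ⟨v, hv⟩ := Int.exists_mul_modEq_one_of_isCoprime hcop
  have hv_p : (v : ZMod p) * (1 + y1) = 1 := by
    exact_mod_cast (ZMod.intCast_eq_intCast_iff _ _ p).mpr (hv.of_dvd hpn)
  have hcircle_pn : (y1 : ZMod (p ^ n)) ^ 2 + (y2 : ZMod (p ^ n)) ^ 2 = 1 := by
    exact_mod_cast (ZMod.intCast_eq_intCast_iff_pow _ _ p n).mpr h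
  have hv_pn : (v : ZMod (p ^ n)) * (1 + y1) = 1 := by
    exact_mod_cast (ZMod.intCast_eq_intCast_iff_pow _ _ p n).mpr hv
  have htwo : (2 : ZMod p) ≠ 0 := Ring.two_ne_zero <| by
    rw [ZMod.ringChar_zmod_n]
    rintro rfl
    exact Nat.not_odd_iff_even.mpr even_two hodd
  refine ⟨y2 * v, ?_, ?_, ?_⟩
  · rw [← ZMod.intCast_zmod_eq_zero_iff_dvd]
    push_cast
    rw [slope_mul_one_sub_sq_mul_one_add_sq hcircle_p hv_p]
    exact mul_ne_zero (mul_ne_zero (pow_ne_zero _ htwo) hy_p)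
      (pow_ne_zero _ (left_ne_zero_of_mul_eq_one hv_p))
  · rw [← ZMod.intCast_eq_intCast_iff_pow]
    push_cast
    exact one_add_slope_sq_mul_fst hcircle_pn hv_pn
  · rw [← ZMod.intCast_eq_intCast_iff_pow]
    push_cast
    exact one_add_slope_sq_mul_snd hcircle_pn hv_pn
end

section
/- Let p be an odd prime and n ≥ 1 an integer. Then the number of pairs (y1, y2) ∈ (ℤ/p^nℤ)² such that y1 and y2 are both units of ℤ/p^nℤ and y1² + y2² = 1 in ℤ/p^nℤ equals p^{n−1}·(p − s(p)). -/
/-! Projecting from `(-1, 0)`, `t = y₂ / (1 + y₁)` with inverse `t ↦ (1 - t², 2t) / (1 + t²)`,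
identifies the points of the unit circle over a ring with `2` invertible whose coordinates are
both units with the `t` for which `t`, `1 - t²` and `1 + t²` are units, i.e. `t - t⁵` is a unit.
Over `ℤ/pⁿ` this depends only on `t mod p`, every residue has `pⁿ⁻¹` lifts, and modulo `p` the
excluded residues are `0` and the fourth roots of unity, of which there are `gcd(p - 1, 4)`. -/

section StereographicProjection

variable {R : Type*} [CommRing R]

theorem isUnit_add_one_of_sq_add_sq_eq_one {x y : R} (hy : IsUnit y)
    (h : x ^ 2 + y ^ 2 = 1) : IsUnit (x + 1) :=
  isUnit_of_mul_isUnit_left (y := x - 1) <| by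
    rw [show (x + 1) * (x - 1) = -y ^ 2 by linear_combination h]
    exact (hy.pow 2).neg

theorem isUnit_sub_pow_five_iff (t : R) :
    IsUnit (t - t ^ 5) ↔ IsUnit t ∧ IsUnit (1 - t ^ 2) ∧ IsUnit (1 + t ^ 2) := by
  rw [show t - t ^ 5 = t * ((1 - t ^ 2) * (1 + t ^ 2)) by ring, IsUnit.mul_iff, IsUnit.mul_iff]

theorem one_add_sq_mul_eq {x y w : R} (h : x ^ 2 + y ^ 2 = 1) (hw : (x + 1) * w = 1) :
    1 + (y * w) ^ 2 = 2 * w := by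
  linear_combination (w - x * w - 1) * hw + w ^ 2 * h

theorem one_sub_sq_mul_eq {x y w : R} (h : x ^ 2 + y ^ 2 = 1) (hw : (x + 1) * w = 1) :
    1 - (y * w) ^ 2 = 2 * x * w := by
  linear_combination (x * w - w - 1) * hw - w ^ 2 * h

theorem isUnit_sub_pow_five_of_sq_add_sq_eq_one (two : IsUnit (2 : R)) {x y : R} (hx : IsUnit x)
    (hy : IsUnit y) (h : x ^ 2 + y ^ 2 = 1) :
    IsUnit (y * Ring.inverse (x + 1) - (y * Ring.inverse (x + 1)) ^ 5) := by
  have hx1 := isUnit_add_one_of_sq_add_sq_eq_one hy h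
  have hw := Ring.mul_inverse_cancel _ hx1
  have hwu : IsUnit (Ring.inverse (x + 1)) := isUnit_ringInverse.mpr hx1
  rw [isUnit_sub_pow_five_iff, one_add_sq_mul_eq h hw, one_sub_sq_mul_eq h hw]
  exact ⟨hy.mul hwu, (two.mul hx).mul hwu, two.mul hwu⟩

noncomputable def unitCircleUnitsEquiv (two : IsUnit (2 : R)) :
    {y : R × R // IsUnit y.1 ∧ IsUnit y.2 ∧ y.1 ^ 2 + y.2 ^ 2 = 1} ≃
      {t : R // IsUnit (t - t ^ 5)} where
  toFun y := ⟨y.1.2 * Ring.inverse (y.1.1 + 1),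
    isUnit_sub_pow_five_of_sq_add_sq_eq_one two y.2.1 y.2.2.1 y.2.2.2⟩
  invFun t := by
    refine ⟨((1 - t.1 ^ 2) * Ring.inverse (1 + t.1 ^ 2), 2 * t.1 * Ring.inverse (1 + t.1 ^ 2)), ?_⟩
    obtain ⟨t, ht⟩ := t
    rw [isUnit_sub_pow_five_iff] at ht
    obtain ⟨ht, hm, hp⟩ := ht
    have hv := Ring.mul_inverse_cancel _ hp
    have hvu : IsUnit (Ring.inverse (1 + t ^ 2)) := isUnit_ringInverse.mpr hp
    exact ⟨hm.mul hvu, (two.mul ht).mul hvu,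
      by linear_combination ((1 + t ^ 2) * Ring.inverse (1 + t ^ 2) + 1) * hv⟩
  left_inv := by
    rintro ⟨⟨x, y⟩, hx, hy, h⟩
    dsimp only at hx hy h
    have hx1 := isUnit_add_one_of_sq_add_sq_eq_one hy h
    have hw := Ring.mul_inverse_cancel _ hx1
    set w := Ring.inverse (x + 1)
    have hp := one_add_sq_mul_eq h hw
    have hm := one_sub_sq_mul_eq h hw
    have hv := Ring.mul_inverse_cancel _ (hp ▸ two.mul (isUnit_ringInverse.mpr hx1))
    set v := Ring.inverse (1 + (y * w) ^ 2)
    ext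
    · linear_combination v * hm - x * v * hp + x * hv
    · linear_combination -y * v * hp + y * hv
  right_inv := by
    rintro ⟨t, ht⟩
    rw [isUnit_sub_pow_five_iff] at ht
    have hv := Ring.mul_inverse_cancel _ ht.2.2
    have hvu : IsUnit (Ring.inverse (1 + t ^ 2)) := isUnit_ringInverse.mpr ht.2.2
    set v := Ring.inverse (1 + t ^ 2)
    have h2v : (1 - t ^ 2) * v + 1 = 2 * v := by linear_combination -hv
    have hw := Ring.mul_inverse_cancel _ (h2v ▸ two.mul hvu)
    ext
    linear_combination t * hw - t * Ring.inverse ((1 - t ^ 2) * v + 1) * h2v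

end StereographicProjection

open Finset in
theorem AddMonoidHom.card_subtype_comp_mul_card {G H : Type*} [AddGroup G] [AddGroup H] [Finite G]
    (f : G →+ H) (hf : Function.Surjective f) (P : H → Prop) :
    Nat.card {g // P (f g)} * Nat.card H = Nat.card {h // P h} * Nat.card G := by
  classical
  have : Fintype G := Fintype.ofFinite G
  have : Fintype H := Fintype.ofSurjective f hf
  have hpre (Q : H → Prop) [DecidablePred Q] : #{g | Q (f g)} = #{h | Q h} * #{g | f g = 0} := by
    rw [card_eq_sum_card_fiberwise (f := f) (t := {h | Q h}) (fun g hg ↦ by simpa using hg),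
      ← smul_eq_mul, ← sum_const]
    refine sum_congr rfl fun a ha ↦ ?_
    rw [filter_filter, ← card_fiber_eq_of_mem_range f (hf a) (hf 0)]
    congr 1
    exact filter_congr fun g _ ↦ ⟨And.right, fun h ↦ ⟨h ▸ (mem_filter.mp ha).2, h⟩⟩
  have hall := hpre fun _ ↦ True
  simp only [filter_true, card_univ] at hall
  simp only [Nat.card_eq_fintype_card, Fintype.card_subtype, hpre P, hall]
  ring

theorem card_ne_zero_pow_ne_one {K : Type*} [Field K] [Finite K] (d : ℕ) :
    Nat.card {a : K // a ≠ 0 ∧ a ^ d ≠ 1} = (Nat.card K - 1) - (Nat.card K - 1).gcd d := by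
  classical
  have : Fintype K := Fintype.ofFinite K
  have e : {a : K // a ≠ 0 ∧ a ^ d ≠ 1} ≃ {u : Kˣ // ¬ u ∈ (powMonoidHom d : Kˣ →* Kˣ).ker} :=
    (Equiv.subtypeSubtypeEquivSubtypeInter _ _).symm.trans
      (unitsEquivNeZero.symm.subtypeEquiv fun a ↦ by simp [Units.ext_iff])
  rw [Nat.card_congr e, Nat.card_eq_fintype_card, Fintype.card_subtype_compl,
    ← Nat.card_eq_fintype_card, ← Nat.card_eq_fintype_card, IsCyclic.card_powMonoidHom_ker,
    Nat.card_units]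

theorem ZMod.isUnit_iff_castHom_ne_zero {p n : ℕ} (hp : p.Prime) (hn : n ≠ 0) (a : ZMod (p ^ n)) :
    IsUnit a ↔ ZMod.castHom (dvd_pow_self p hn) (ZMod p) a ≠ 0 := by
  have : NeZero (p ^ n) := ⟨pow_ne_zero n hp.ne_zero⟩
  rw [← ZMod.natCast_zmod_val a, map_natCast, ZMod.isUnit_natCast_iff_not_dvd_pow hp (by omega),
    Ne, ZMod.natCast_eq_zero_iff]

theorem ZMod.card_sub_pow_five_ne_zero {p : ℕ} [Fact p.Prime] (hodd : Odd p) :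
    Nat.card {a : ZMod p // a - a ^ 5 ≠ 0} = p - if p % 4 = 1 then 5 else 3 := by
  have hsub (a : ZMod p) : a - a ^ 5 ≠ 0 ↔ a ≠ 0 ∧ a ^ 4 ≠ 1 := by
    rw [show a - a ^ 5 = a * (1 - a ^ 4) by ring, mul_ne_zero_iff, sub_ne_zero, ne_comm (a := 1)]
  have hodd' := Nat.odd_iff.mp hodd
  have hp := (Fact.out : p.Prime).two_le
  rw [Nat.card_congr (Equiv.subtypeEquivRight hsub), card_ne_zero_pow_ne_one, Nat.card_zmod,
    Nat.gcd_comm, Nat.gcd_rec]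
  split_ifs with h
  · rw [show (p - 1) % 4 = 0 by omega]; norm_num; omega
  · rw [show (p - 1) % 4 = 2 by omega]; norm_num; omega

theorem stmt_9 (p : ℕ) (hp : p.Prime) (hodd : Odd p) (n : ℕ) (hn : 1 ≤ n) :
    Nat.card {y : ZMod (p ^ n) × ZMod (p ^ n) //
        IsUnit y.1 ∧ IsUnit y.2 ∧ y.1 ^ 2 + y.2 ^ 2 = 1} =
      p ^ (n - 1) * (p - if p % 4 = 1 then 5 else 3) := by
  have : Fact p.Prime := ⟨hp⟩
  have hn0 : n ≠ 0 := by omega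
  set π := ZMod.castHom (dvd_pow_self p hn0) (ZMod p)
  have two : IsUnit (2 : ZMod (p ^ n)) := by
    have hp2 : p ≠ 2 := by rintro rfl; norm_num at hodd
    simpa using (ZMod.isUnit_natCast_iff_not_dvd_pow (a := 2) hp (by omega)).mpr
      fun h ↦ hp2 ((Nat.prime_dvd_prime_iff_eq hp Nat.prime_two).mp h)
  have hunit (t : ZMod (p ^ n)) : IsUnit (t - t ^ 5) ↔ π t - π t ^ 5 ≠ 0 := by
    rw [ZMod.isUnit_iff_castHom_ne_zero hp hn0, map_sub, map_pow]
  have hpow : p ^ n = p ^ (n - 1) * p := by rw [← pow_succ, Nat.sub_add_cancel hn]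
  refine Nat.eq_of_mul_eq_mul_right hp.pos ?_
  calc _ = Nat.card {t : ZMod (p ^ n) // π t - π t ^ 5 ≠ 0} * Nat.card (ZMod p) := by
          rw [Nat.card_zmod,
            Nat.card_congr ((unitCircleUnitsEquiv two).trans (Equiv.subtypeEquivRight hunit))]
    _ = Nat.card {a : ZMod p // a - a ^ 5 ≠ 0} * Nat.card (ZMod (p ^ n)) :=
          (π : ZMod (p ^ n) →+ ZMod p).card_subtype_comp_mul_card
            (ZMod.ringHom_surjective π) (fun a ↦ a - a ^ 5 ≠ 0)
    _ = _ := by rw [ZMod.card_sub_pow_five_ne_zero hodd, Nat.card_zmod, hpow]; ring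
end

section
/- Let p be an odd prime, n ≥ 2 an integer, F1, F2 ∈ ℤ[X], and set G := F1'·F2 − F1·F2' ∈ ℤ[X]; assume G ≠ 0 and let r be the p-adic valuation of the content of G (the gcd of the coefficients of G). Let α ∈ ℤ with p ∤ F2(α), and assume r ≤ n − 2. Define S_α(f; p^n) := Σ_{x = 1, x ≡ α (mod p)}^{p^n} e^{2πi·v(x)/p^n}, where for each such x, v(x) ∈ {0,1,...,p^n−1} is the representative of F1(x)·F2(x)^{−1} in ℤ/p^nℤ (F2(x) is invertible mod p^n since p ∤ F2(α)). If p^{r+1} ∤ G(α), then S_α(f; p^n) = 0. -/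
/-!
Write `x = y + pˢ z` with `s = n - r - 1`, `y < pˢ` and `z < p^(r+1)`. Taylor expansion at `y` gives
`F₂(y) F₁(y + u) - F₂(y + u) F₁(y) = ∑ₖ Wₖ(y) uᵏ`, where `Wₖ = F₂ Dᵏ F₁ - Dᵏ F₂ F₁` with `Dᵏ` the
`k`-th Hasse derivative, and `W₁ = G = pʳ G₀`. Differentiating `G` yields a recursion showing
`pʳ ∣ k! F₂ᵏ Wₖ`; as `v_p(k!) ≤ k - 2` for odd `p`, every term with `k ≥ 2` vanishes modulo `pⁿ`
when `u = pˢ z`. Hence `f(y + pˢ z) ≡ f(y) + z p^(n-1) G₀(y) / F₂(y)² (mod pⁿ)`, and because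
`p ∤ G₀(y)` the sum over `z` is a geometric sum of a nontrivial `p`-th root of unity, which
vanishes.
-/

open Polynomial Finset
open scoped Nat

theorem Finset.Nat.sum_antidiagonal_sub_mul_mul_eq_zero {M : Type*} [CommRing M] (f : ℕ → M)
    (m : ℕ) :
    ∑ x ∈ antidiagonal m, ((x.2 : M) - x.1) * (f x.1 * f x.2) = 0 := by
  simp only [sub_mul, sum_sub_distrib, sub_eq_zero]
  rw [← Nat.sum_antidiagonal_swap]
  exact sum_congr rfl fun x _ => by simp only [Prod.fst_swap, Prod.snd_swap]; ring

namespace Polynomial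

variable {R : Type*} [CommRing R]

noncomputable def hasseWronskian (k : ℕ) (a b : R[X]) : R[X] :=
  a * hasseDeriv k b - hasseDeriv k a * b

@[simp]
theorem hasseWronskian_zero (a b : R[X]) : hasseWronskian 0 a b = 0 := by
  simp [hasseWronskian]

theorem hasseWronskian_one (a b : R[X]) : hasseWronskian 1 a b = wronskian a b := by
  simp [hasseWronskian, wronskian]

theorem hasseDeriv_derivative (k : ℕ) (f : R[X]) :
    hasseDeriv k (derivative f) = ((k + 1 : ℕ) : R[X]) * hasseDeriv (k + 1) f := by
  rw [← hasseDeriv_one', ← LinearMap.comp_apply, hasseDeriv_comp, Nat.choose_succ_self_right,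
    LinearMap.smul_apply, nsmul_eq_mul]

theorem hasseDeriv_wronskian (j : ℕ) (a b : R[X]) :
    hasseDeriv j (wronskian a b) = ∑ x ∈ antidiagonal (j + 1),
      ((x.2 : R[X]) - x.1) * (hasseDeriv x.1 a * hasseDeriv x.2 b) := by
  simp only [sub_mul, sum_sub_distrib]
  rw [wronskian, map_sub, hasseDeriv_mul, hasseDeriv_mul, Nat.sum_antidiagonal_succ',
    Nat.sum_antidiagonal_succ]
  simp only [hasseDeriv_derivative, Nat.cast_zero, zero_mul, zero_add]
  congr 1 <;> refine sum_congr rfl fun x _ => ?_ <;> push_cast <;> ring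

theorem mul_hasseDeriv_wronskian (j : ℕ) (a b : R[X]) :
    a * hasseDeriv j (wronskian a b) = ∑ x ∈ antidiagonal (j + 1),
      ((x.2 : R[X]) - x.1) * (hasseDeriv x.1 a * hasseWronskian x.2 a b) := by
  calc a * hasseDeriv j (wronskian a b)
      = ∑ x ∈ antidiagonal (j + 1),
          ((x.2 : R[X]) - x.1) * (hasseDeriv x.1 a * hasseWronskian x.2 a b)
        + b * ∑ x ∈ antidiagonal (j + 1),
          ((x.2 : R[X]) - x.1) * (hasseDeriv x.1 a * hasseDeriv x.2 a) := by
        rw [hasseDeriv_wronskian, mul_sum, mul_sum, ← sum_add_distrib]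
        exact sum_congr rfl fun x _ => by rw [hasseWronskian]; ring
    _ = _ := by
        rw [Nat.sum_antidiagonal_sub_mul_mul_eq_zero (fun i => hasseDeriv i a), mul_zero, add_zero]

theorem C_dvd_hasseDeriv {c : R} {f : R[X]} (h : C c ∣ f) (k : ℕ) : C c ∣ hasseDeriv k f := by
  obtain ⟨g, rfl⟩ := h
  exact ⟨hasseDeriv k g, by rw [← smul_eq_C_mul, map_smul, smul_eq_C_mul]⟩

theorem C_dvd_factorial_mul_pow_mul_hasseWronskian {a b : R[X]} {c : R}
    (h : C c ∣ wronskian a b) (k : ℕ) :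
    C c ∣ (k ! : R[X]) * a ^ k * hasseWronskian k a b := by
  induction k using Nat.strong_induction_on with
  | _ k ih =>
  obtain _ | j := k
  · simp
  have hsplit := mul_hasseDeriv_wronskian j a b
  rw [Nat.sum_antidiagonal_succ] at hsplit
  simp only [Nat.cast_zero, sub_zero, hasseDeriv_zero'] at hsplit
  have hlower : ∀ x ∈ antidiagonal j, C c ∣ (j ! : R[X]) * a ^ j *
      ((((x.2 : ℕ) : R[X]) - ((x.1 + 1 : ℕ) : R[X])) *
        (hasseDeriv (x.1 + 1) a * hasseWronskian x.2 a b)) := by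
    intro x hx
    have hle : x.2 ≤ j := by rw [HasAntidiagonal.mem_antidiagonal] at hx; omega
    refine (ih x.2 (by omega)).trans ?_
    calc (x.2 ! : R[X]) * a ^ x.2 * hasseWronskian x.2 a b
        ∣ (j ! : R[X]) * a ^ j * hasseWronskian x.2 a b :=
          mul_dvd_mul_right (mul_dvd_mul (Nat.cast_dvd_cast (Nat.factorial_dvd_factorial hle))
            (pow_dvd_pow a hle)) _
      _ ∣ _ := mul_dvd_mul_left _ ((dvd_mul_left _ _).mul_left _)
  calc C c ∣ (j ! : R[X]) * a ^ j * (a * hasseDeriv j (wronskian a b)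
        - ∑ x ∈ antidiagonal j, (((x.2 : ℕ) : R[X]) - ((x.1 + 1 : ℕ) : R[X])) *
          (hasseDeriv (x.1 + 1) a * hasseWronskian x.2 a b)) := by
        rw [mul_sub, mul_sum]
        exact dvd_sub (((C_dvd_hasseDeriv h j).mul_left a).mul_left _) (dvd_sum hlower)
    _ = ((j + 1) ! : R[X]) * a ^ (j + 1) * hasseWronskian (j + 1) a b := by
        rw [hsplit, add_sub_cancel_right, Nat.factorial_succ]
        push_cast
        ring

theorem eval_mul_eval_add_sub_eq_sum (a b : R[X]) {n : ℕ} (ha : a.natDegree < n)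
    (hb : b.natDegree < n) (y u : R) :
    a.eval y * b.eval (y + u) - a.eval (y + u) * b.eval y
      = ∑ k ∈ range n, (hasseWronskian k a b).eval y * u ^ k := by
  have taylor_expansion : ∀ f : R[X], f.natDegree < n →
      f.eval (y + u) = ∑ k ∈ range n, (hasseDeriv k f).eval y * u ^ k := by
    intro f hf
    rw [add_comm, ← taylor_eval, eval_eq_sum_range' (by rwa [natDegree_taylor])]
    simp only [taylor_coeff]
  rw [taylor_expansion a ha, taylor_expansion b hb, mul_sum, sum_mul, ← sum_sub_distrib]
  exact sum_congr rfl fun k _ => by simp only [hasseWronskian, eval_sub, eval_mul]; ring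

end Polynomial

theorem Polynomial.aeval_intCast {A : Type*} [Ring A] (F : ℤ[X]) (y : ℤ) :
    aeval (y : A) F = ((F.eval y : ℤ) : A) := by
  simpa using aeval_algebraMap_apply_eq_algebraMap_eval (A := A) y F

theorem Polynomial.C_pow_padicValInt_content_dvd (p : ℕ) (G : ℤ[X]) :
    C ((p : ℤ) ^ padicValInt p G.content) ∣ G :=
  (C_dvd_iff_dvd_coeff _ _).mpr fun i => (padicValInt_dvd _).trans (G.content_dvd_coeff i)

theorem Polynomial.dvd_eval_iff_of_intCast_eq {p : ℕ} {x y : ℤ} (h : (x : ZMod p) = y)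
    (F : ℤ[X]) : (p : ℤ) ∣ F.eval x ↔ (p : ℤ) ∣ F.eval y := by
  rw [← ZMod.intCast_zmod_eq_zero_iff_dvd, ← ZMod.intCast_zmod_eq_zero_iff_dvd, ← aeval_intCast,
    ← aeval_intCast, h]

theorem Finset.sum_range_mul_eq_sum_sum {M : Type*} [AddCommMonoid M] (f : ℕ → M) (m k : ℕ) :
    ∑ x ∈ range (m * k), f x = ∑ y ∈ range m, ∑ z ∈ range k, f (y + m * z) := by
  induction k with
  | zero => simp
  | succ k ih =>
    rw [mul_add_one, sum_range_add, ih]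
    simp only [sum_range_succ, sum_add_distrib, add_comm]

theorem ZMod.mul_inv_eq_mul_inv_add {N : ℕ} {a a' b b' e t : ZMod N} (ha : IsUnit a)
    (ha' : IsUnit a') (he : e * (a' - a) = 0) (h : a * b' - a' * b = e * t) :
    b' * a'⁻¹ = b * a⁻¹ + e * t * a⁻¹ ^ 2 := by
  have h1 := ZMod.mul_inv_of_unit a ha
  have h2 := ZMod.mul_inv_of_unit a' ha'
  linear_combination (a⁻¹ * a'⁻¹) * h - (b' * a'⁻¹ + e * t * a⁻¹ * a'⁻¹) * h1
    + (b * a⁻¹ + e * t * a⁻¹ ^ 2) * h2 - t * a⁻¹ ^ 2 * a'⁻¹ * he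

theorem ZMod.sum_range_stdAddChar_add_mul {N K : ℕ} [NeZero N] (x c : ZMod N) (hc : c ≠ 0)
    (hKc : (K : ZMod N) * c = 0) :
    ∑ z ∈ range K, stdAddChar (x + (z : ZMod N) * c) = 0 := by
  have hψc : stdAddChar (N := N) c ≠ 1 := by
    rwa [← AddChar.map_zero_eq_one (stdAddChar (N := N)), injective_stdAddChar.ne_iff]
  simp only [AddChar.map_add_eq_mul, ← nsmul_eq_mul, AddChar.map_nsmul_eq_pow, ← mul_sum]
  rw [geom_sum_eq hψc, ← AddChar.map_nsmul_eq_pow, nsmul_eq_mul, hKc, AddChar.map_zero_eq_one,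
    sub_self, zero_div, mul_zero]

theorem ZMod.exp_val_div_eq_stdAddChar {p n : ℕ} [NeZero p] (q : ZMod (p ^ n)) :
    Complex.exp (2 * Real.pi * Complex.I * (q.val : ℂ) / (p : ℂ) ^ n) = stdAddChar q := by
  rw [stdAddChar_apply, toCircle_apply]
  push_cast
  rfl

section OddPrime

variable {p : ℕ} [hp : Fact p.Prime]

theorem padicValNat_factorial_add_two_le (hodd : Odd p) {k : ℕ} (hk : 2 ≤ k) :
    padicValNat p k ! + 2 ≤ k := by
  have hlt := sub_one_mul_padicValNat_factorial_lt_of_ne_zero p (n := k) (by omega)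
  have h3 : 2 ≤ p - 1 := by obtain ⟨m, rfl⟩ := hodd; have := hp.out.two_le; omega
  have := Nat.mul_le_mul_right (padicValNat p k !) h3
  omega

theorem isUnit_intCast_zmod_pow {c : ℤ} (hc : ¬ (p : ℤ) ∣ c) (n : ℕ) :
    IsUnit (c : ZMod (p ^ n)) := by
  rw [ZMod.coe_int_isUnit_iff_isCoprime, Nat.cast_pow]
  exact ((Nat.prime_iff_prime_int.mp hp.out).coprime_iff_not_dvd.mpr hc).pow_left

theorem pow_dvd_eval_hasseWronskian (hodd : Odd p) {r k : ℕ} (hk : 2 ≤ k) {a b : ℤ[X]}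
    (hW : C ((p : ℤ) ^ r) ∣ wronskian a b) {y : ℤ} (hy : ¬ (p : ℤ) ∣ a.eval y) :
    (p : ℤ) ^ (r + 2 - k) ∣ (hasseWronskian k a b).eval y := by
  have h := eval_dvd (x := y) (C_dvd_factorial_mul_pow_mul_hasseWronskian hW k)
  simp only [eval_C, eval_mul, eval_natCast, eval_pow] at h
  rcases eq_or_ne ((hasseWronskian k a b).eval y) 0 with hw | hw
  · simp [hw]
  have hak : ¬ (p : ℤ) ∣ a.eval y ^ k := fun h =>
    hy ((Nat.prime_iff_prime_int.mp hp.out).dvd_of_dvd_pow h)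
  have hfac : (k ! : ℤ) ≠ 0 := by exact_mod_cast k.factorial_ne_zero
  have hak0 : a.eval y ^ k ≠ 0 := fun h0 => hak (h0 ▸ dvd_zero _)
  rw [padicValInt_dvd_iff, padicValInt.mul (mul_ne_zero hfac hak0) hw, padicValInt.mul hfac hak0,
    padicValInt.of_nat, padicValInt.eq_zero_of_not_dvd hak] at h
  have := padicValNat_factorial_add_two_le hodd hk
  rw [padicValInt_dvd_iff]
  right
  rcases h with h | h
  · exact absurd h (mul_ne_zero (mul_ne_zero hfac hak0) hw)
  · omega

theorem pow_dvd_eval_mul_eval_add_sub (hodd : Odd p) {r s : ℕ} (hs : 1 ≤ s) {a b : ℤ[X]}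
    (hW : C ((p : ℤ) ^ r) ∣ wronskian a b) {y : ℤ} (hy : ¬ (p : ℤ) ∣ a.eval y) (z : ℤ) :
    (p : ℤ) ^ (r + 1 + s) ∣ a.eval y * b.eval (y + (p : ℤ) ^ s * z)
      - a.eval (y + (p : ℤ) ^ s * z) * b.eval y - (wronskian a b).eval y * ((p : ℤ) ^ s * z) := by
  obtain ⟨m, hma, hmb⟩ : ∃ m, a.natDegree < m + 2 ∧ b.natDegree < m + 2 :=
    ⟨max a.natDegree b.natDegree, by omega, by omega⟩
  rw [eval_mul_eval_add_sub_eq_sum a b hma hmb, sum_range_succ', sum_range_succ',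
    hasseWronskian_zero, hasseWronskian_one]
  simp only [eval_zero, zero_mul, add_zero, zero_add, pow_one, add_sub_cancel_right]
  refine dvd_sum fun k _ => ?_
  have hexp : r + 1 + s ≤ (r + 2 - (k + 1 + 1)) + s * (k + 1 + 1) := by
    have : k ≤ s * k := Nat.le_mul_of_pos_left k hs
    rw [mul_add, mul_add]
    omega
  calc (p : ℤ) ^ (r + 1 + s) ∣ (p : ℤ) ^ (r + 2 - (k + 1 + 1)) * (p : ℤ) ^ (s * (k + 1 + 1)) := by
        rw [← pow_add]; exact pow_dvd_pow _ hexp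
    _ ∣ (hasseWronskian (k + 1 + 1) a b).eval y * ((p : ℤ) ^ s * z) ^ (k + 1 + 1) := by
        rw [mul_pow, ← pow_mul]
        exact mul_dvd_mul (pow_dvd_eval_hasseWronskian hodd (by omega) hW hy) (dvd_mul_right _ _)

theorem aeval_mul_inv_aeval_add_pow_mul (hodd : Odd p) {n r s : ℕ} (hs : 1 ≤ s)
    (hn : r + 1 + s = n) {a b g : ℤ[X]} (hW : wronskian a b = C ((p : ℤ) ^ r) * g) {y : ℤ}
    (hy : ¬ (p : ℤ) ∣ a.eval y) (z : ℤ) :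
    aeval ((y + (p : ℤ) ^ s * z : ℤ) : ZMod (p ^ n)) b
      * (aeval ((y + (p : ℤ) ^ s * z : ℤ) : ZMod (p ^ n)) a)⁻¹
      = aeval (y : ZMod (p ^ n)) b * (aeval (y : ZMod (p ^ n)) a)⁻¹
        + z * ((p : ZMod (p ^ n)) ^ (r + s) * aeval (y : ZMod (p ^ n)) g
          * (aeval (y : ZMod (p ^ n)) a)⁻¹ ^ 2) := by
  have hpdvd : (p : ℤ) ∣ (y + (p : ℤ) ^ s * z) - y := by
    rw [add_sub_cancel_left]
    exact (dvd_pow_self _ (by omega)).mul_right z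
  have hy' : ¬ (p : ℤ) ∣ a.eval (y + (p : ℤ) ^ s * z) := by
    rwa [dvd_eval_iff_of_intCast_eq ((ZMod.intCast_eq_intCast_iff_dvd_sub _ _ _).mpr hpdvd).symm]
  simp only [aeval_intCast]
  rw [ZMod.mul_inv_eq_mul_inv_add (isUnit_intCast_zmod_pow hy n) (isUnit_intCast_zmod_pow hy' n)
    (b := ((b.eval y : ℤ) : ZMod (p ^ n)))
    (b' := ((b.eval (y + (p : ℤ) ^ s * z) : ℤ) : ZMod (p ^ n)))
    (e := (p : ZMod (p ^ n)) ^ (r + s))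
    (t := (z : ZMod (p ^ n)) * ((g.eval y : ℤ) : ZMod (p ^ n)))
    ?_ ?_]
  · ring
  · obtain ⟨d, hd⟩ := hpdvd.trans (sub_dvd_eval_sub _ _ a)
    rw [← Int.cast_sub, hd, Int.cast_mul, Int.cast_natCast, ← mul_assoc, ← pow_succ,
      show r + s + 1 = n by omega, ← Nat.cast_pow, ZMod.natCast_self, zero_mul]
  · have := pow_dvd_eval_mul_eval_add_sub hodd hs (hW ▸ dvd_mul_right _ _) hy z (b := b)
    rw [hW, eval_mul, eval_C, hn] at this
    have := (ZMod.intCast_zmod_eq_zero_iff_dvd _ (p ^ n)).mpr (by exact_mod_cast this)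
    push_cast at this
    linear_combination this

theorem sum_range_stdAddChar_aeval_mul_inv_aeval_add_pow_mul (hodd : Odd p) {n r s : ℕ}
    (hs : 1 ≤ s) (hn : r + 1 + s = n) {a b g : ℤ[X]} (hW : wronskian a b = C ((p : ℤ) ^ r) * g)
    {y : ℕ} (hay : ¬ (p : ℤ) ∣ a.eval (y : ℤ)) (hgy : ¬ (p : ℤ) ∣ g.eval (y : ℤ)) :
    ∑ z ∈ range (p ^ (r + 1)), ZMod.stdAddChar (aeval ((y + p ^ s * z : ℕ) : ZMod (p ^ n)) b
      * (aeval ((y + p ^ s * z : ℕ) : ZMod (p ^ n)) a)⁻¹) = 0 := by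
  have hstep : ∀ z : ℕ, aeval ((y + p ^ s * z : ℕ) : ZMod (p ^ n)) b
      * (aeval ((y + p ^ s * z : ℕ) : ZMod (p ^ n)) a)⁻¹
        = aeval (y : ZMod (p ^ n)) b * (aeval (y : ZMod (p ^ n)) a)⁻¹
          + z * ((p : ZMod (p ^ n)) ^ (r + s)
            * (aeval (y : ZMod (p ^ n)) g * (aeval (y : ZMod (p ^ n)) a)⁻¹ ^ 2)) := fun z => by
    have := aeval_mul_inv_aeval_add_pow_mul hodd hs hn hW hay z
    push_cast at this ⊢
    rw [this, mul_assoc _ (aeval _ g)]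
  have hunit : IsUnit (aeval (y : ZMod (p ^ n)) g * (aeval (y : ZMod (p ^ n)) a)⁻¹ ^ 2) := by
    have := (isUnit_intCast_zmod_pow hgy n).mul
      ((ZMod.isUnit_inv (isUnit_intCast_zmod_pow hay n)).pow 2)
    rw [← aeval_intCast, ← aeval_intCast] at this
    exact_mod_cast this
  simp only [hstep]
  refine ZMod.sum_range_stdAddChar_add_mul _ _ ?_ ?_
  · rw [Ne, hunit.mul_left_eq_zero, ← Nat.cast_pow, ZMod.natCast_eq_zero_iff,
      Nat.pow_dvd_pow_iff_le_right hp.out.one_lt]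
    omega
  · rw [← mul_assoc, ← Nat.cast_pow, ← Nat.cast_mul, ← pow_add,
      (ZMod.natCast_eq_zero_iff _ _).mpr (pow_dvd_pow p (by omega)), zero_mul]

end OddPrime

theorem stmt_10_general (p : ℕ) (hp : p.Prime) (hodd : Odd p) (n : ℕ) (hn : 2 ≤ n)
    (F1 F2 G : Polynomial ℤ)
    (hG : G = Polynomial.derivative F1 * F2 - F1 * Polynomial.derivative F2)
    (r : ℕ) (hr : r = padicValInt p G.content)
    (α : ℤ) (hF2 : ¬ (p : ℤ) ∣ F2.eval α) (hrn : r ≤ n - 2)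
    (hroot : ¬ (p : ℤ) ^ (r + 1) ∣ G.eval α) :
    (∑ x ∈ Finset.range (p ^ n),
      if ((x : ZMod p) = (α : ZMod p)) then
        Complex.exp (2 * Real.pi * Complex.I *
          ((Polynomial.aeval (x : ZMod (p ^ n)) F1 *
            (Polynomial.aeval (x : ZMod (p ^ n)) F2)⁻¹).val : ℂ) / (p : ℂ) ^ n)
      else 0) = 0 := by
  have : Fact p.Prime := ⟨hp⟩
  obtain ⟨s, hs, hrsn⟩ : ∃ s, 1 ≤ s ∧ r + 1 + s = n := ⟨n - r - 1, by omega, by omega⟩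
  obtain ⟨g, hg⟩ : C ((p : ℤ) ^ r) ∣ G := hr ▸ C_pow_padicValInt_content_dvd p G
  have hW : wronskian F2 F1 = C ((p : ℤ) ^ r) * g := by rw [wronskian, ← hg, hG]; ring
  have hgα : ¬ (p : ℤ) ∣ g.eval α := fun ⟨d, hd⟩ =>
    hroot ⟨d, by rw [hg, eval_mul, eval_C, hd, pow_succ, mul_assoc]⟩
  simp_rw [ZMod.exp_val_div_eq_stdAddChar]
  rw [show range (p ^ n) = range (p ^ s * p ^ (r + 1)) by rw [← pow_add]; congr 2; omega,
    sum_range_mul_eq_sum_sum]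
  refine sum_eq_zero fun y _ => ?_
  have hcond : ∀ z : ℕ, ((y + p ^ s * z : ℕ) : ZMod p) = y := fun z => by
    simp [zero_pow (by omega : s ≠ 0)]
  simp only [hcond]
  by_cases hyα : (y : ZMod p) = α
  · simp only [hyα, if_true]
    replace hyα : ((y : ℤ) : ZMod p) = α := by exact_mod_cast hyα
    exact sum_range_stdAddChar_aeval_mul_inv_aeval_add_pow_mul hodd hs hrsn hW
      (by rwa [dvd_eval_iff_of_intCast_eq hyα]) (by rwa [dvd_eval_iff_of_intCast_eq hyα])
  · simp [hyα]

theorem stmt_10 (p : ℕ) (hp : p.Prime) (hodd : Odd p) (n : ℕ) (hn : 2 ≤ n)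
    (F1 F2 G : Polynomial ℤ)
    (hG : G = Polynomial.derivative F1 * F2 - F1 * Polynomial.derivative F2)
    (hG0 : G ≠ 0) (r : ℕ) (hr : r = padicValInt p G.content)
    (α : ℤ) (hF2 : ¬ (p : ℤ) ∣ F2.eval α) (hrn : r ≤ n - 2)
    (hroot : ¬ (p : ℤ) ^ (r + 1) ∣ G.eval α) :
    (∑ x ∈ Finset.range (p ^ n),
      if ((x : ZMod p) = (α : ZMod p)) then
        Complex.exp (2 * Real.pi * Complex.I *
          ((Polynomial.aeval (x : ZMod (p ^ n)) F1 *
            (Polynomial.aeval (x : ZMod (p ^ n)) F2)⁻¹).val : ℂ) / (p : ℂ) ^ n)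
      else 0) = 0 :=
  stmt_10_general p hp hodd n hn F1 F2 G hG r hr α hF2 hrn hroot
end

section
/- Let p be a prime and Φ : ℝ → ℝ a Schwartz function. Then Σ_{x ∈ ℤ, p ∤ x} Φ(x/N) − ((p−1)/p)·Φ̂(0)·N tends to 0 as N → ∞ (N real). -/
/-!
By Poisson summation, `∑ₙ Φ (n / N) = N ∑ₘ Φ̂ (m N)`. The term `m = 0` is `N Φ̂ 0 = N ∫ Φ`, and
since `Φ̂` is again Schwartz, `|Φ̂ x| ≤ C / x²`, so the remaining terms contribute `O(1 / N)`.
The multiples of `p` contribute the same sum at scale `N / p`, whence the main term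
`(1 - 1 / p) N ∫ Φ`.
-/

open MeasureTheory Filter Topology FourierTransform SchwartzMap

theorem Real.fourier_comp_div {F : Type*} [NormedAddCommGroup F] [NormedSpace ℂ F] (f : ℝ → F)
    {N : ℝ} (hN : N ≠ 0) (ξ : ℝ) :
    𝓕 (fun x ↦ f (x / N)) ξ = |N| • 𝓕 f (ξ * N) := by
  simp only [Real.fourier_real_eq]
  rw [← Measure.integral_comp_div _ N]
  congr 1 with x
  rw [div_mul_eq_mul_div, ← mul_assoc, mul_div_cancel_right₀ _ hN]

namespace SchwartzMap

variable {E : Type*} [NormedAddCommGroup E] [NormedSpace ℝ E]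

noncomputable def compMulRight (c : ℝˣ) (f : 𝓢(ℝ, E)) : 𝓢(ℝ, E) :=
  compCLMOfContinuousLinearEquiv ℝ (ContinuousLinearEquiv.unitsEquivAut ℝ c) f

@[simp]
lemma compMulRight_apply (c : ℝˣ) (f : 𝓢(ℝ, E)) (x : ℝ) : compMulRight c f x = f (x * c) := rfl

lemma summable_intCast [CompleteSpace E] (f : 𝓢(ℝ, E)) : Summable fun n : ℤ ↦ f n :=
  summable_of_isBigO (Real.summable_abs_int_rpow one_lt_two) <| by
    simpa only [Real.norm_eq_abs, Function.comp_def] using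
      (f.isBigO_cocompact_rpow (-2)).comp_tendsto Int.tendsto_coe_cofinite

lemma summable_intCast_mul [CompleteSpace E] (f : 𝓢(ℝ, E)) {c : ℝ} (hc : c ≠ 0) :
    Summable fun n : ℤ ↦ f (n * c) :=
  (compMulRight (Units.mk0 c hc) f).summable_intCast

lemma summable_intCast_div [CompleteSpace E] (f : 𝓢(ℝ, E)) {c : ℝ} (hc : c ≠ 0) :
    Summable fun n : ℤ ↦ f (n / c) := by
  simpa only [div_eq_mul_inv] using f.summable_intCast_mul (inv_ne_zero hc)

lemma exists_norm_le_div_sq (f : 𝓢(ℝ, E)) : ∃ C, ∀ x ≠ 0, ‖f x‖ ≤ C / x ^ 2 := by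
  obtain ⟨C, -, hC⟩ := f.decay 2 0
  refine ⟨C, fun x hx ↦ ?_⟩
  rw [le_div_iff₀ (by positivity), mul_comm, ← sq_abs, ← Real.norm_eq_abs]
  simpa only [norm_iteratedFDeriv_zero] using hC x

theorem tendsto_smul_tsum_mul_sub_apply_zero [CompleteSpace E] (f : 𝓢(ℝ, E)) :
    Tendsto (fun N : ℝ ↦ N • (∑' m : ℤ, f (m * N) - f 0)) atTop (𝓝 0) := by
  obtain ⟨C, hC⟩ := f.exists_norm_le_div_sq
  set S := ∑' m : ℤ, 1 / (m : ℝ) ^ 2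
  have hS : Summable fun m : ℤ ↦ 1 / (m : ℝ) ^ 2 := Real.summable_one_div_int_pow.mpr one_lt_two
  have hbound : ∀ N > 0, ‖N • (∑' m : ℤ, f (m * N) - f 0)‖ ≤ C * S * N⁻¹ := by
    intro N hN
    have hterm : ∀ m : ℤ, ‖if m = 0 then 0 else f (m * N)‖ ≤ C * N⁻¹ ^ 2 * (1 / (m : ℝ) ^ 2) := by
      intro m
      split_ifs with hm
      -- `1 / 0 ^ 2 = 0`, so at `m = 0` the bound reads `0 ≤ 0`
      · simp [hm]
      · have hmN : (m : ℝ) * N ≠ 0 := mul_ne_zero (Int.cast_ne_zero.mpr hm) hN.ne'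
        calc ‖f (m * N)‖ ≤ C / (m * N) ^ 2 := hC _ hmN
          _ = C * N⁻¹ ^ 2 * (1 / (m : ℝ) ^ 2) := by field_simp
    rw [(f.summable_intCast_mul hN.ne').tsum_eq_add_tsum_ite 0, Int.cast_zero, zero_mul,
      add_sub_cancel_left, norm_smul, Real.norm_of_nonneg hN.le]
    calc N * ‖∑' m : ℤ, if m = 0 then 0 else f (m * N)‖
        ≤ N * (C * N⁻¹ ^ 2 * S) := by
          gcongr
          exact tsum_of_norm_bounded (hS.hasSum.mul_left _) hterm
      _ = C * S * N⁻¹ := by field_simp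
  refine squeeze_zero_norm' (eventually_gt_atTop 0 |>.mono hbound) ?_
  simpa using tendsto_inv_atTop_zero.const_mul (C * S)

theorem tsum_div_eq_smul_tsum_fourier (f : 𝓢(ℝ, ℂ)) {N : ℝ} (hN : 0 < N) :
    ∑' n : ℤ, f (n / N) = N • ∑' m : ℤ, 𝓕 f (m * N) := by
  set g := compMulRight (Units.mk0 N⁻¹ (inv_ne_zero hN.ne')) f
  have hg : ⇑g = fun x ↦ f (x / N) := funext fun x ↦ by simp [g, div_eq_mul_inv]
  have hFg (m : ℤ) : 𝓕 g m = N • 𝓕 f (m * N) := by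
    rw [fourier_coe, hg, Real.fourier_comp_div _ hN.ne', abs_of_pos hN, fourier_coe]
  simpa [hg, hFg, fourier_eval_zero, tsum_mul_left] using g.tsum_eq_tsum_fourier 0

theorem tendsto_tsum_div_sub_smul_integral (f : 𝓢(ℝ, ℂ)) :
    Tendsto (fun N : ℝ ↦ ∑' n : ℤ, f (n / N) - N • ∫ x, f x) atTop (𝓝 0) := by
  have hF0 : 𝓕 f 0 = ∫ x, f x := by simp [fourier_coe, Real.fourier_real_eq]
  refine (tendsto_smul_tsum_mul_sub_apply_zero (𝓕 f)).congr' ?_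
  filter_upwards [eventually_gt_atTop 0] with N hN
  rw [tsum_div_eq_smul_tsum_fourier f hN, hF0, smul_sub]

theorem tendsto_tsum_div_sub_integral_mul (Φ : 𝓢(ℝ, ℝ)) :
    Tendsto (fun N : ℝ ↦ ∑' n : ℤ, Φ (n / N) - (∫ x, Φ x) * N) atTop (𝓝 0) := by
  rw [← tendsto_ofReal_iff, Complex.ofReal_zero]
  convert tendsto_tsum_div_sub_smul_integral (postcompCLM (𝕜 := ℝ) Complex.ofRealCLM Φ)
    using 2 with N
  simp [Complex.ofReal_tsum, integral_complex_ofReal, mul_comm]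

end SchwartzMap

theorem tsum_subtype_not_dvd {G : Type*} [AddCommGroup G] [UniformSpace G] [IsUniformAddGroup G]
    [CompleteSpace G] [T2Space G] {F : ℤ → G} (hF : Summable F) {p : ℤ} (hp : p ≠ 0) :
    ∑' x : {x : ℤ // ¬ p ∣ x}, F x = ∑' n, F n - ∑' n, F (p * n) := by
  have hrange : Set.range (p * ·) = {x : ℤ | p ∣ x} := by
    ext x; simp [eq_comm, Dvd.dvd]
  have hmultiples : ∑' x : {x : ℤ | p ∣ x}, F x = ∑' n, F (p * n) :=
    hrange ▸ tsum_range F (mul_right_injective₀ hp)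
  have hsplit := hF.tsum_subtype_add_tsum_subtype_compl {x : ℤ | p ∣ x}
  rw [hmultiples] at hsplit
  exact eq_sub_of_add_eq' hsplit

theorem stmt_17 (p : ℕ) (hp : p.Prime) (Φ : SchwartzMap ℝ ℝ) :
    Filter.Tendsto (fun N : ℝ =>
      (∑' x : {x : ℤ // ¬ (p : ℤ) ∣ x}, Φ ((x : ℤ) / N)) -
        ((p : ℝ) - 1) / p * (∫ x : ℝ, Φ x) * N)
      Filter.atTop (nhds 0) := by
  have hp0 : (0 : ℝ) < p := by exact_mod_cast hp.pos
  have hlim := Φ.tendsto_tsum_div_sub_integral_mul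
  refine (hlim.sub (hlim.comp (tendsto_id.atTop_div_const hp0))).congr' ?_ |>.trans (by simp)
  filter_upwards [eventually_gt_atTop 0] with N hN
  rw [tsum_subtype_not_dvd (Φ.summable_intCast_div hN.ne') (by exact_mod_cast hp.ne_zero)]
  have hrescale (n : ℤ) : Φ (((p * n : ℤ) : ℝ) / N) = Φ (n / (N / p)) := by
    congr 1; push_cast; field_simp
  simp only [tsum_congr hrescale, Function.comp_apply, id]
  rw [sub_div, div_self hp0.ne']
  ring
end
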